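/- Let k ≥ 1 be an integer, ε > 0, and δ ∈ (0,1). Let x_1, …, x_k be nonnegative real numbers with n = Σ_{i=1}^k x_i, let L_1, …, L_k be independent random variables each Laplace-distributed with location 0 and scale 1/ε, and set x̃_i = x_i + L_i and ñ = Σ_{i=1}^k x̃_i. With Δ = ln(2k/δ)/ε and Δ' = k·ln(2k²/δ)/ε, for each fixed index i ∈ {1,…,k}: Pr[x_i · (ñ − Δ') > n · (x̃_i + Δ)] ≤ δ/k. -/

import Mathlib

/-!
Outside the event `L i ≤ -Δ` and the events `L j > Δ' / k`, the noise `L i + Δ` is nonnegative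
and the total noise `Σ L j` is at most `Δ'`, so both sides of the failure inequality compare with
`x i · n` in the wrong direction. A one-sided Laplace tail beyond `log a / ε` has mass `1 / (2a)`,
so the union bound over these `k + 1` events gives `δ/(4k) + k · δ/(4k²) = δ/(2k)`.
-/

open MeasureTheory ProbabilityTheory

/-- The Laplace distribution with location 0 and scale `b`, as the measure on `ℝ`
with density `(1/(2b)) · exp (−|t|/b)` with respect to Lebesgue measure. -/
noncomputable def laplaceMeasure (b : ℝ) : Measure ℝ :=
  MeasureTheory.volume.withDensity
    (fun t => ENNReal.ofReal ((1 / (2 * b)) * Real.exp (-|t| / b)))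

open Set Real

theorem laplaceMeasure_Ioi {b : ℝ} (hb : 0 < b) {c : ℝ} (hc : 0 ≤ c) :
    laplaceMeasure b (Ioi c) = ENNReal.ofReal (exp (-c / b) / 2) := by
  have hdensity : EqOn (fun t => ENNReal.ofReal (1 / (2 * b) * exp (-|t| / b)))
      (fun t => ENNReal.ofReal (1 / (2 * b) * exp (-b⁻¹ * t))) (Ioi c) := by
    intro t ht
    dsimp only
    rw [abs_of_pos (hc.trans_lt ht), neg_div, neg_mul, div_eq_inv_mul t]
  have hneg : -b⁻¹ < 0 := by simpa using hb
  rw [laplaceMeasure, withDensity_apply _ measurableSet_Ioi,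
    setLIntegral_congr_fun measurableSet_Ioi hdensity,
    ← ofReal_integral_eq_lintegral_ofReal ((integrableOn_exp_mul_Ioi hneg c).const_mul _)
      (ae_of_all _ fun t => by positivity),
    integral_const_mul, integral_exp_mul_Ioi hneg]
  congr 1
  field_simp

theorem laplaceMeasure_Iic {b : ℝ} (hb : 0 < b) {c : ℝ} (hc : 0 ≤ c) :
    laplaceMeasure b (Iic (-c)) = ENNReal.ofReal (exp (-c / b) / 2) := by
  have hdensity : EqOn (fun t => ENNReal.ofReal (1 / (2 * b) * exp (-|t| / b)))
      (fun t => ENNReal.ofReal (1 / (2 * b) * exp (b⁻¹ * t))) (Iic (-c)) := by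
    intro t ht
    dsimp only
    rw [abs_of_nonpos (ht.trans (neg_nonpos.2 hc)), neg_neg, div_eq_inv_mul t]
  have hpos : 0 < b⁻¹ := by simpa using hb
  rw [laplaceMeasure, withDensity_apply _ measurableSet_Iic,
    setLIntegral_congr_fun measurableSet_Iic hdensity,
    ← ofReal_integral_eq_lintegral_ofReal ((integrableOn_exp_mul_Iic hpos _).const_mul _)
      (ae_of_all _ fun t => by positivity),
    integral_const_mul, integral_exp_mul_Iic hpos]
  congr 1
  field_simp

theorem laplaceMeasure_Ioi_log_div {ε : ℝ} (hε : 0 < ε) {a : ℝ} (ha : 1 ≤ a) :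
    laplaceMeasure (1 / ε) (Ioi (log a / ε)) = ENNReal.ofReal (1 / (2 * a)) := by
  rw [laplaceMeasure_Ioi (by positivity) (div_nonneg (log_nonneg ha) hε.le),
    show -(log a / ε) / (1 / ε) = -log a by field_simp, exp_neg, exp_log (by positivity)]
  congr 1
  field_simp

theorem laplaceMeasure_Iic_neg_log_div {ε : ℝ} (hε : 0 < ε) {a : ℝ} (ha : 1 ≤ a) :
    laplaceMeasure (1 / ε) (Iic (-(log a / ε))) = ENNReal.ofReal (1 / (2 * a)) := by
  rw [laplaceMeasure_Iic (by positivity) (div_nonneg (log_nonneg ha) hε.le),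
    show -(log a / ε) / (1 / ε) = -log a by field_simp, exp_neg, exp_log (by positivity)]
  congr 1
  field_simp

theorem mul_sum_add_sub_le_sum_mul_add_add {ι : Type*} [Fintype ι] {x l : ι → ℝ}
    (hx : ∀ j, 0 ≤ x j) {i : ι} {Δ c : ℝ} (hi : -Δ ≤ l i) (hl : ∀ j, l j ≤ c) :
    x i * (∑ j, (x j + l j) - Fintype.card ι * c) ≤ (∑ j, x j) * (x i + l i + Δ) := by
  have hsum : ∑ j, l j ≤ Fintype.card ι * c := by
    simpa using Finset.sum_le_sum fun j (_ : j ∈ Finset.univ) => hl j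
  calc x i * (∑ j, (x j + l j) - Fintype.card ι * c) ≤ x i * ∑ j, x j := by
        rw [Finset.sum_add_distrib]
        exact mul_le_mul_of_nonneg_left (by linarith) (hx i)
    _ = (∑ j, x j) * x i := mul_comm _ _
    _ ≤ (∑ j, x j) * (x i + l i + Δ) :=
        mul_le_mul_of_nonneg_left (by linarith) (Finset.sum_nonneg fun j _ => hx j)

theorem measure_union_iUnion_le_ofReal {Ω ι : Type*} [MeasurableSpace Ω] [Fintype ι]
    {μ : Measure Ω} {A : Set Ω} {B : ι → Set Ω} {p q : ℝ} (hp : 0 ≤ p) (hq : 0 ≤ q)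
    (hA : μ A ≤ ENNReal.ofReal p) (hB : ∀ j, μ (B j) ≤ ENNReal.ofReal q) :
    μ (A ∪ ⋃ j, B j) ≤ ENNReal.ofReal (p + Fintype.card ι * q) := by
  rw [ENNReal.ofReal_add hp (by positivity), ENNReal.ofReal_mul (by positivity),
    ENNReal.ofReal_natCast]
  calc μ (A ∪ ⋃ j, B j) ≤ μ A + ∑ j, μ (B j) :=
        (measure_union_le _ _).trans (by gcongr; exact measure_iUnion_fintype_le _ _)
    _ ≤ ENNReal.ofReal p + ∑ _j : ι, ENNReal.ofReal q := by gcongr with j; exact hB j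
    _ = ENNReal.ofReal p + Fintype.card ι * ENNReal.ofReal q := by simp

theorem per_index_failure_bound_general
    {Ω : Type*} [MeasurableSpace Ω] (μ : Measure Ω) [IsProbabilityMeasure μ]
    (k : ℕ) (ε δ : ℝ) (hε : 0 < ε) (hδ0 : 0 < δ)
    (x : Fin k → ℝ) (hx : ∀ i, 0 ≤ x i)
    (L : Fin k → Ω → ℝ) (hL : ∀ i, Measurable (L i))
    (hmap : ∀ i, μ.map (L i) = laplaceMeasure (1 / ε))
    (i : Fin k) :
    μ {ω |
        (∑ j, x j) * ((x i + L i ω) + Real.log (2 * (k : ℝ) / δ) / ε)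
          < x i * ((∑ j, (x j + L j ω)) - (k : ℝ) * Real.log (2 * (k : ℝ) ^ 2 / δ) / ε)}
      ≤ ENNReal.ofReal (δ / k) := by
  have hk : (1 : ℝ) ≤ k := Nat.one_le_cast.2 i.pos
  rcases le_or_gt (k : ℝ) δ with hδk | hδk
  · exact prob_le_one.trans <| ENNReal.one_le_ofReal.2 <| (one_le_div (by positivity)).2 hδk
  have hΔ : 1 ≤ 2 * (k : ℝ) / δ := (one_le_div hδ0).2 (by linarith)
  have hΔ' : 1 ≤ 2 * (k : ℝ) ^ 2 / δ := (one_le_div hδ0).2 (by nlinarith)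
  have hincl : {ω | (∑ j, x j) * ((x i + L i ω) + log (2 * k / δ) / ε)
        < x i * ((∑ j, (x j + L j ω)) - k * log (2 * k ^ 2 / δ) / ε)}
      ⊆ L i ⁻¹' Iic (-(log (2 * k / δ) / ε))
        ∪ ⋃ j, L j ⁻¹' Ioi (log (2 * k ^ 2 / δ) / ε) := by
    intro ω hω
    by_contra hgood
    simp only [mem_union, mem_iUnion, mem_preimage, mem_Iic, mem_Ioi, not_or, not_exists,
      not_le, not_lt] at hgood
    have := mul_sum_add_sub_le_sum_mul_add_add hx hgood.1.le hgood.2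
    rw [Fintype.card_fin, ← mul_div_assoc] at this
    exact (not_lt.2 this) hω
  have hlaw : ∀ j {s : Set ℝ}, MeasurableSet s → μ (L j ⁻¹' s) = laplaceMeasure (1 / ε) s :=
    fun j _ hs => by rw [← Measure.map_apply (hL j) hs, hmap j]
  calc μ _ ≤ _ := measure_mono hincl
    _ ≤ ENNReal.ofReal
          (1 / (2 * (2 * k / δ)) + Fintype.card (Fin k) * (1 / (2 * (2 * k ^ 2 / δ)))) :=
        measure_union_iUnion_le_ofReal (by positivity) (by positivity)
          (by rw [hlaw i measurableSet_Iic, laplaceMeasure_Iic_neg_log_div hε hΔ])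
          (fun j => by rw [hlaw j measurableSet_Ioi, laplaceMeasure_Ioi_log_div hε hΔ'])
    _ ≤ ENNReal.ofReal (δ / k) := by
        refine ENNReal.ofReal_le_ofReal ?_
        rw [Fintype.card_fin]
        field_simp
        norm_num

/-- the per-index failure bound for the inflationary repair algorithm.
With `x̃ i = x i + L i` (independent Laplace(0,1/ε) noise), `ñ = Σ x̃ j`,
`Δ = ln(2k/δ)/ε` and `Δ' = k·ln(2k²/δ)/ε`, for each fixed index `i`:
`Pr[x i · (ñ − Δ') > n · (x̃ i + Δ)] ≤ δ/k`. -/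
theorem per_index_failure_bound
    {Ω : Type*} [MeasurableSpace Ω] (μ : Measure Ω) [IsProbabilityMeasure μ]
    (k : ℕ) (hk : 1 ≤ k) (ε δ : ℝ) (hε : 0 < ε) (hδ0 : 0 < δ) (hδ1 : δ < 1)
    (x : Fin k → ℝ) (hx : ∀ i, 0 ≤ x i)
    (L : Fin k → Ω → ℝ) (hL : ∀ i, Measurable (L i))
    (hindep : iIndepFun L μ)
    (hmap : ∀ i, μ.map (L i) = laplaceMeasure (1 / ε))
    (i : Fin k) :
    μ {ω |
        (∑ j, x j) * ((x i + L i ω) + Real.log (2 * (k : ℝ) / δ) / ε)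
          < x i * ((∑ j, (x j + L j ω)) - (k : ℝ) * Real.log (2 * (k : ℝ) ^ 2 / δ) / ε)}
      ≤ ENNReal.ofReal (δ / k) :=
  per_index_failure_bound_general μ k ε δ hε hδ0 x hx L hL hmap i
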